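/- arXiv:1701.05958 — 6 statements merged into one kernel-verified Lean document; each statement's English description precedes it below -/
import Mathlib

section
/- Let U ⊆ ℂ be open and let g : ℂ → ℂ be holomorphic on U with g'(ζ) ≠ 0 for all ζ ∈ U. Define K(ζ) = -(2|g'(ζ)|/(1+|g(ζ)|²))⁴ and N(ζ) = (1-|g(ζ)|²)/(1+|g(ζ)|²). Then the first Chern–Ricci function CR¹(ζ) = ln((-K(ζ))^{-1/4}(1+N(ζ))), viewed as a function of (u,v) with ζ = u+iv, is harmonic on U: ∂²CR¹/∂u² + ∂²CR¹/∂v² = 0 at every point of U. -/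
/-!
On `U` the two curvature factors collapse: `(-K)^(-1/4) = (1 + |g|²) / (2|g'|)` and
`1 + N = 2 / (1 + |g|²)`, so `CR¹ = -log |g'|`. Since `g'` is holomorphic and zero-free,
`log |g'|` is harmonic, and for a `C²` function on `ℂ` the Laplacian is the sum of the second
derivatives along the horizontal and vertical lines through a point.
-/

open Filter Topology InnerProductSpace Laplacian

section LineRestriction

variable {𝕜 : Type*} [NontriviallyNormedField 𝕜] {E F : Type*}
  [NormedAddCommGroup E] [NormedSpace 𝕜 E] [NormedAddCommGroup F] [NormedSpace 𝕜 F]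

theorem iteratedDeriv_two_comp_line {f : E → F} {a w : E} {t : 𝕜}
    (hf : ContDiffAt 𝕜 2 f (a + t • w)) :
    iteratedDeriv 2 (fun s : 𝕜 => f (a + s • w)) t =
      iteratedFDeriv 𝕜 2 f (a + t • w) ![w, w] := by
  have hline : ∀ s : 𝕜, HasDerivAt (fun s : 𝕜 => a + s • w) w s := fun s => by
    simpa using ((hasDerivAt_id s).smul_const w).const_add a
  have hfirst : deriv (fun s : 𝕜 => f (a + s • w)) =ᶠ[𝓝 t]
      fun s => fderiv 𝕜 f (a + s • w) w := by
    filter_upwards [(hline t).continuousAt.eventually (hf.eventually (by simp))] with s hs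
    exact ((hs.differentiableAt two_ne_zero).hasFDerivAt.comp_hasDerivAt s (hline s)).deriv
  have hsecond : HasDerivAt (fun s : 𝕜 => fderiv 𝕜 f (a + s • w) w)
      (fderiv 𝕜 (fderiv 𝕜 f) (a + t • w) w w) t := by
    have hf' := ((hf.fderiv_right (m := 1) (by norm_num)).differentiableAt one_ne_zero).hasFDerivAt
    simpa [Function.comp_def] using
      ((ContinuousLinearMap.apply 𝕜 F w).hasFDerivAt.comp _ hf').comp_hasDerivAt t (hline t)
  rw [iteratedDeriv_succ, iteratedDeriv_one, hfirst.deriv_eq, hsecond.deriv,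
    iteratedFDeriv_two_apply]
  simp

end LineRestriction

theorem iteratedDeriv_two_add_iteratedDeriv_two_eq_laplacian {F : Type*} [NormedAddCommGroup F]
    [NormedSpace ℝ F] {f : ℂ → F} {u v : ℝ} (hf : ContDiffAt ℝ 2 f (u + v * Complex.I)) :
    iteratedDeriv 2 (fun u' : ℝ => f (u' + v * Complex.I)) u
      + iteratedDeriv 2 (fun v' : ℝ => f (u + v' * Complex.I)) v = Δ f (u + v * Complex.I) := by
  have hu : iteratedDeriv 2 (fun u' : ℝ => f (u' + v * Complex.I)) u
      = iteratedFDeriv ℝ 2 f (u + v * Complex.I) ![1, 1] := by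
    simpa [add_comm] using iteratedDeriv_two_comp_line (a := (v * Complex.I : ℂ)) (w := (1 : ℂ))
      (t := u) (f := f) (by simpa [add_comm] using hf)
  have hv : iteratedDeriv 2 (fun v' : ℝ => f (u + v' * Complex.I)) v
      = iteratedFDeriv ℝ 2 f (u + v * Complex.I) ![Complex.I, Complex.I] := by
    simpa using iteratedDeriv_two_comp_line (a := (u : ℂ)) (w := Complex.I) (t := v) (f := f)
      (by simpa using hf)
  rw [hu, hv, laplacian_eq_iteratedFDeriv_complexPlane]

theorem HarmonicAt.iteratedDeriv_two_add_iteratedDeriv_two_eq_zero {F : Type*}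
    [NormedAddCommGroup F] [NormedSpace ℝ F] {f : ℂ → F} {u v : ℝ}
    (hf : HarmonicAt f (u + v * Complex.I)) :
    iteratedDeriv 2 (fun u' : ℝ => f (u' + v * Complex.I)) u
      + iteratedDeriv 2 (fun v' : ℝ => f (u + v' * Complex.I)) v = 0 := by
  rw [iteratedDeriv_two_add_iteratedDeriv_two_eq_laplacian hf.1]
  exact hf.2.self_of_nhds

theorem harmonicAt_log_norm_of_hasDerivAt {U : Set ℂ} (hU : IsOpen U) {g g' : ℂ → ℂ}
    (hg : ∀ ζ ∈ U, HasDerivAt g (g' ζ) ζ) {z : ℂ} (hz : z ∈ U) (hg'z : g' z ≠ 0) :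
    HarmonicAt (fun ζ => Real.log ‖g' ζ‖) z := by
  have hderiv : deriv g =ᶠ[𝓝 z] g' := by
    filter_upwards [hU.mem_nhds hz] with ζ hζ
    exact (hg ζ hζ).deriv
  have hanalytic : AnalyticAt ℂ (deriv g) z :=
    (DifferentiableOn.analyticOnNhd
      (fun ζ hζ => (hg ζ hζ).differentiableAt.differentiableWithinAt) hU).deriv z hz
  exact (harmonicAt_congr_nhds (hderiv.fun_comp fun w => Real.log ‖w‖)).1
    (hanalytic.harmonicAt_log_norm (by rwa [hderiv.self_of_nhds]))

theorem log_rpow_neg_one_fourth_mul_one_add_eq_neg_log (a b : ℝ) (hb : 0 < b) :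
    Real.log ((-(-(2 * b / (1 + a ^ 2)) ^ 4)) ^ (-(1 / 4) : ℝ)
      * (1 + (1 - a ^ 2) / (1 + a ^ 2))) = -Real.log b := by
  have hx : 0 < 2 * b / (1 + a ^ 2) := by positivity
  have hroot : ((2 * b / (1 + a ^ 2)) ^ 4) ^ (-(1 / 4) : ℝ) = (2 * b / (1 + a ^ 2))⁻¹ := by
    rw [← Real.rpow_natCast, ← Real.rpow_mul hx.le, ← Real.rpow_neg_one]
    norm_num
  rw [neg_neg, hroot, ← Real.log_inv]
  congr 1
  field_simp
  ring

/-- The first Chern–Ricci function `CR¹ = ln((-K)^(-1/4)·(1+N))`, viewed as a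
function of `(u,v)` with `ζ = u + iv`, is harmonic on `U`: the flat Laplacian
`∂²CR¹/∂u² + ∂²CR¹/∂v²` vanishes at every point of `U`. -/
theorem first_chern_ricci_harmonic
    (U : Set ℂ) (hU : IsOpen U) (g g' : ℂ → ℂ)
    (hg : ∀ ζ ∈ U, HasDerivAt g (g' ζ) ζ)
    (hg' : ∀ ζ ∈ U, g' ζ ≠ 0)
    (K N : ℂ → ℝ)
    (hK : ∀ ζ, K ζ = -(2 * ‖g' ζ‖ / (1 + ‖g ζ‖ ^ 2)) ^ 4)
    (hN : ∀ ζ, N ζ = (1 - ‖g ζ‖ ^ 2) / (1 + ‖g ζ‖ ^ 2))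
    (CR : ℝ → ℝ → ℝ)
    (hCR : ∀ u v : ℝ, CR u v =
      Real.log ((-K (u + v * Complex.I)) ^ (-(1 / 4) : ℝ) * (1 + N (u + v * Complex.I)))) :
    ∀ u v : ℝ, (u + v * Complex.I : ℂ) ∈ U →
      iteratedDeriv 2 (fun u' => CR u' v) u + iteratedDeriv 2 (fun v' => CR u v') v = 0 := by
  intro u v hz
  have hCR_eq : (fun ζ => Real.log ((-K ζ) ^ (-(1 / 4) : ℝ) * (1 + N ζ)))
      =ᶠ[𝓝 (u + v * Complex.I)] fun ζ => -Real.log ‖g' ζ‖ := by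
    filter_upwards [hU.mem_nhds hz] with ζ hζ
    rw [hK, hN]
    exact log_rpow_neg_one_fourth_mul_one_add_eq_neg_log _ _ (norm_pos_iff.2 (hg' ζ hζ))
  have hharmonic := (harmonicAt_congr_nhds hCR_eq).2
    (harmonicAt_log_norm_of_hasDerivAt hU hg hz (hg' _ hz)).neg
  simpa only [hCR] using HarmonicAt.iteratedDeriv_two_add_iteratedDeriv_two_eq_zero hharmonic
end

section
/- Let U ⊆ ℂ be a connected open set and let g : ℂ → ℂ be holomorphic on U with g'(ζ) ≠ 0 for all ζ ∈ U. Define K(ζ) = -(2|g'(ζ)|/(1+|g(ζ)|²))⁴ and N(ζ) = (1-|g(ζ)|²)/(1+|g(ζ)|²). If the first Chern–Ricci function CR¹(ζ) = ln((-K(ζ))^{-1/4}(1+N(ζ))) is constant on U, then there exist constants α ∈ ℂ∖{0} and β ∈ ℂ such that g(ζ) = αζ + β for all ζ ∈ U; that is, the corresponding minimal surface is Enneper's surface (up to isometries and homotheties of ℝ³). -/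
/-!
The first Chern–Ricci function collapses to `-log ‖g'‖`: indeed `(-K)^(-1/4) = (1 + |g|²) / (2|g'|)`
and `1 + N = 2 / (1 + |g|²)`. So `‖g'‖` is constant on `U`, the maximum modulus principle makes
the holomorphic function `g'` constant, and a function with constant derivative on a connected
open set is affine.
-/

open Set Function

lemma rpow_neg_one_fourth_of_pow_four {x : ℝ} (hx : 0 ≤ x) :
    (x ^ 4) ^ (-(1 / 4) : ℝ) = x⁻¹ := by
  rw [← Real.rpow_natCast, ← Real.rpow_mul hx]
  norm_num [Real.rpow_neg_one]

lemma first_chern_ricci_eq_neg_log {a b : ℝ} (ha : 0 ≤ a) :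
    Real.log ((-(-(2 * a / (1 + b ^ 2)) ^ 4)) ^ (-(1 / 4) : ℝ) * (1 + (1 - b ^ 2) / (1 + b ^ 2)))
      = -Real.log a := by
  have hb : 0 < 1 + b ^ 2 := by positivity
  rw [neg_neg, rpow_neg_one_fourth_of_pow_four (by positivity), ← Real.log_inv]
  congr 1
  field_simp
  ring

theorem Complex.eqOn_of_isPreconnected_of_norm_eqOn {E F : Type*} [NormedAddCommGroup E]
    [NormedSpace ℂ E] [NormedAddCommGroup F] [NormedSpace ℂ F] [StrictConvexSpace ℝ F]
    {f : E → F} {U : Set E} {c : E} {r : ℝ} (hc : IsPreconnected U) (ho : IsOpen U)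
    (hd : DifferentiableOn ℂ f U) (hcU : c ∈ U) (hr : ∀ x ∈ U, ‖f x‖ = r) :
    EqOn f (const E (f c)) U :=
  eqOn_of_isPreconnected_of_isMaxOn_norm hc ho hd hcU fun x hx => by
    simp [hr x hx, hr c hcU]

theorem IsOpen.exists_eq_mul_add_of_hasDerivAt {𝕜 : Type*} [RCLike 𝕜] {U : Set 𝕜} {g : 𝕜 → 𝕜}
    {α : 𝕜} (hU : IsOpen U) (hUc : IsPreconnected U) (hg : ∀ ζ ∈ U, HasDerivAt g α ζ) :
    ∃ β, ∀ ζ ∈ U, g ζ = α * ζ + β :=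
  hU.exists_eq_add_of_deriv_eq hUc (fun ζ hζ => (hg ζ hζ).differentiableAt.differentiableWithinAt)
    (differentiableOn_id.const_mul α) fun ζ hζ => by simp [(hg ζ hζ).deriv]

theorem IsOpen.differentiableOn_deriv_of_hasDerivAt {U : Set ℂ} {g g' : ℂ → ℂ} (hU : IsOpen U)
    (hg : ∀ ζ ∈ U, HasDerivAt g (g' ζ) ζ) : DifferentiableOn ℂ g' U :=
  (DifferentiableOn.analyticOnNhd (fun ζ hζ => (hg ζ hζ).differentiableAt.differentiableWithinAt)
    hU).deriv.differentiableOn.congr fun ζ hζ => ((hg ζ hζ).deriv).symm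

theorem exists_eq_mul_add_of_norm_deriv_eqOn {U : Set ℂ} {g g' : ℂ → ℂ} {r : ℝ} (hU : IsOpen U)
    (hUconn : IsConnected U) (hg : ∀ ζ ∈ U, HasDerivAt g (g' ζ) ζ)
    (hr : ∀ ζ ∈ U, ‖g' ζ‖ = r) : ∃ α β : ℂ, ‖α‖ = r ∧ ∀ ζ ∈ U, g ζ = α * ζ + β := by
  obtain ⟨z₀, hz₀⟩ := hUconn.nonempty
  have hg'_const := Complex.eqOn_of_isPreconnected_of_norm_eqOn hUconn.isPreconnected hU
    (hU.differentiableOn_deriv_of_hasDerivAt hg) hz₀ hr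
  obtain ⟨β, hβ⟩ := hU.exists_eq_mul_add_of_hasDerivAt hUconn.isPreconnected fun ζ hζ =>
    hg'_const hζ ▸ hg ζ hζ
  exact ⟨g' z₀, β, hr z₀ hz₀, hβ⟩

/-- **Uniqueness of Enneper's surface.** If the first Chern–Ricci function
`CR¹ = ln((-K)^(-1/4)·(1+N))` is constant on a connected open set `U`, then the Gauss map is
affine, `g(ζ) = αζ + β` with `α ≠ 0`; that is, the corresponding minimal surface is Enneper's
surface up to isometries and homotheties of `ℝ³`. -/
theorem enneper_unique_of_constant_first_chern_ricci
    (U : Set ℂ) (hU : IsOpen U) (hUconn : IsConnected U) (g g' : ℂ → ℂ)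
    (hg : ∀ ζ ∈ U, HasDerivAt g (g' ζ) ζ)
    (hg' : ∀ ζ ∈ U, g' ζ ≠ 0)
    (K N : ℂ → ℝ)
    (hK : ∀ ζ, K ζ = -(2 * ‖g' ζ‖ / (1 + ‖g ζ‖ ^ 2)) ^ 4)
    (hN : ∀ ζ, N ζ = (1 - ‖g ζ‖ ^ 2) / (1 + ‖g ζ‖ ^ 2))
    (C : ℝ)
    (hconst : ∀ ζ ∈ U, Real.log ((-K ζ) ^ (-(1 / 4) : ℝ) * (1 + N ζ)) = C) :
    ∃ α β : ℂ, α ≠ 0 ∧ ∀ ζ ∈ U, g ζ = α * ζ + β := by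
  have hnorm : ∀ ζ ∈ U, ‖g' ζ‖ = Real.exp (-C) := fun ζ hζ => by
    have hlog := hconst ζ hζ
    rw [hK, hN, first_chern_ricci_eq_neg_log (norm_nonneg _)] at hlog
    rw [← hlog, neg_neg, Real.exp_log (norm_pos_iff.mpr (hg' ζ hζ))]
  obtain ⟨α, β, hα, hβ⟩ := exists_eq_mul_add_of_norm_deriv_eqOn hU hUconn hg hnorm
  exact ⟨α, β, norm_pos_iff.mp (hα ▸ Real.exp_pos _), hβ⟩
end

section
/- Let U ⊆ ℂ be a connected open set and let g : ℂ → ℂ be holomorphic on U with g(ζ) ≠ 0 and g'(ζ) ≠ 0 for all ζ ∈ U. Define K(ζ) = -(2|g'(ζ)|/(1+|g(ζ)|²))⁴ and N(ζ) = (1-|g(ζ)|²)/(1+|g(ζ)|²). If the second Chern–Ricci function CR²(ζ) = ln((-K(ζ))^{-1/2}(1-N(ζ)²)) is constant on U, then there exist constants α ∈ ℂ∖{0} and c ∈ ℂ∖{0} such that g(ζ) = c·exp(αζ) for all ζ ∈ U. -/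
/-!
The quantity inside the logarithm simplifies to `|g|² / |g'|²`, so a constant second
Chern–Ricci function means that the logarithmic derivative `g'/g` has constant modulus.
By the maximum modulus principle `g'/g` is then a constant `α`, and `g' = α g` on the
connected set `U` forces `g = c exp(α ζ)`.
-/

open Complex

lemma rpow_neg_half_mul_one_sub_sq_eq_sq_div_sq (a : ℝ) {b : ℝ} (hb : 0 ≤ b) :
    ((2 * b / (1 + a ^ 2)) ^ 4) ^ (-(1 / 2) : ℝ) * (1 - ((1 - a ^ 2) / (1 + a ^ 2)) ^ 2) =
      a ^ 2 / b ^ 2 := by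
  have hden : 0 < 1 + a ^ 2 := by positivity
  have hrpow :
      ((2 * b / (1 + a ^ 2)) ^ 4) ^ (-(1 / 2) : ℝ) = ((2 * b / (1 + a ^ 2)) ^ 2)⁻¹ := by
    rw [← Real.rpow_natCast _ 4, ← Real.rpow_mul (by positivity)]
    norm_num
  rw [hrpow]
  field_simp
  ring

lemma norm_inv_eq_exp_of_log_norm_sq_eq {x : ℂ} {C : ℝ} (h : Real.log (‖x‖ ^ 2) = C)
    (hx : x ≠ 0) : ‖x⁻¹‖ = Real.exp (-(C / 2)) := by
  have hlog : Real.log ‖x‖ = C / 2 := by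
    rw [Real.log_pow] at h
    push_cast at h
    linarith
  rw [norm_inv, Real.exp_neg, ← hlog, Real.exp_log (norm_pos_iff.mpr hx)]

lemma DifferentiableOn.eq_of_norm_eq_const {E F : Type*} [NormedAddCommGroup E]
    [NormedSpace ℂ E] [NormedAddCommGroup F] [NormedSpace ℂ F] [StrictConvexSpace ℝ F]
    {f : E → F} {U : Set E}
    (hU : IsOpen U) (hUc : IsPreconnected U) (hf : DifferentiableOn ℂ f U) {r : ℝ}
    (hr : ∀ z ∈ U, ‖f z‖ = r) {z₀ : E} (hz₀ : z₀ ∈ U) :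
    ∀ z ∈ U, f z = f z₀ :=
  Complex.eqOn_of_isPreconnected_of_isMaxOn_norm hUc hU hf hz₀ fun z hz =>
    (hr z hz).trans_le (hr z₀ hz₀).ge

lemma exists_eq_mul_exp_of_hasDerivAt_mul_self {g : ℂ → ℂ} {U : Set ℂ} (hU : IsOpen U)
    (hUc : IsPreconnected U) {α : ℂ} (hg : ∀ z ∈ U, HasDerivAt g (α * g z) z) :
    ∃ c, ∀ z ∈ U, g z = c * exp (α * z) := by
  have hquot : ∀ z ∈ U, HasDerivAt (fun z => g z * exp (-(α * z))) 0 z := by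
    intro z hz
    have hexp : HasDerivAt (fun z => exp (-(α * z))) (exp (-(α * z)) * -α) z :=
      (hasDerivAt_exp _).comp z (((hasDerivAt_id z).const_mul α).neg.congr_deriv (by simp))
    exact ((hg z hz).mul hexp).congr_deriv (by ring)
  obtain ⟨c, hc⟩ := hU.exists_is_const_of_deriv_eq_zero hUc
    (fun z hz => (hquot z hz).differentiableAt.differentiableWithinAt)
    (fun z hz => (hquot z hz).deriv)
  refine ⟨c, fun z hz => ?_⟩
  rw [← hc z hz, mul_assoc, ← exp_add, neg_add_cancel, exp_zero, mul_one]

/-- **Classification for the second Chern–Ricci function.** If the second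
Chern–Ricci function `CR² = ln((-K)^(-1/2)·(1-N²))` is constant on a connected open set `U`,
then the Gauss map is an exponential, `g(ζ) = c·exp(αζ)` with `α ≠ 0`, `c ≠ 0`. -/
theorem exponential_gauss_map_of_constant_second_chern_ricci
    (U : Set ℂ) (hU : IsOpen U) (hUconn : IsConnected U) (g g' : ℂ → ℂ)
    (hg : ∀ ζ ∈ U, HasDerivAt g (g' ζ) ζ)
    (hg0 : ∀ ζ ∈ U, g ζ ≠ 0)
    (hg' : ∀ ζ ∈ U, g' ζ ≠ 0)
    (K N : ℂ → ℝ)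
    (hK : ∀ ζ, K ζ = -(2 * ‖g' ζ‖ / (1 + ‖g ζ‖ ^ 2)) ^ 4)
    (hN : ∀ ζ, N ζ = (1 - ‖g ζ‖ ^ 2) / (1 + ‖g ζ‖ ^ 2))
    (C : ℝ)
    (hconst : ∀ ζ ∈ U, Real.log ((-K ζ) ^ (-(1 / 2) : ℝ) * (1 - N ζ ^ 2)) = C) :
    ∃ α c : ℂ, α ≠ 0 ∧ c ≠ 0 ∧ ∀ ζ ∈ U, g ζ = c * Complex.exp (α * ζ) := by
  obtain ⟨ζ₀, hζ₀⟩ := hUconn.nonempty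
  have hlogDeriv : ∀ ζ ∈ U, logDeriv g ζ = g' ζ / g ζ := fun ζ hζ => by
    rw [logDeriv_apply, (hg ζ hζ).deriv]
  have hgd : DifferentiableOn ℂ g U := fun ζ hζ =>
    (hg ζ hζ).differentiableAt.differentiableWithinAt
  have hdiff : DifferentiableOn ℂ (logDeriv g) U := (hgd.deriv hU).div hgd hg0
  have hnorm : ∀ ζ ∈ U, ‖logDeriv g ζ‖ = Real.exp (-(C / 2)) := fun ζ hζ => by
    rw [hlogDeriv ζ hζ, ← inv_div]
    refine norm_inv_eq_exp_of_log_norm_sq_eq ?_ (div_ne_zero (hg0 ζ hζ) (hg' ζ hζ))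
    have h := hconst ζ hζ
    rwa [hK, hN, neg_neg, rpow_neg_half_mul_one_sub_sq_eq_sq_div_sq _ (norm_nonneg _), ← div_pow,
      ← norm_div] at h
  have hα := hdiff.eq_of_norm_eq_const hU hUconn.isPreconnected hnorm hζ₀
  have hgα : ∀ ζ ∈ U, HasDerivAt g (logDeriv g ζ₀ * g ζ) ζ := fun ζ hζ => by
    rw [← hα ζ hζ, hlogDeriv ζ hζ, div_mul_cancel₀ _ (hg0 ζ hζ)]
    exact hg ζ hζ
  obtain ⟨c, hc⟩ := exists_eq_mul_exp_of_hasDerivAt_mul_self hU hUconn.isPreconnected hgα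
  refine ⟨logDeriv g ζ₀, c, ?_, fun hc0 => hg0 ζ₀ hζ₀ (by simp [hc ζ₀ hζ₀, hc0]), hc⟩
  rw [hlogDeriv ζ₀ hζ₀]
  exact div_ne_zero (hg' ζ₀ hζ₀) (hg0 ζ₀ hζ₀)
end

section
/- Let g : ℂ → ℂ be holomorphic on an open set U with g'(ζ) ≠ 0 for all ζ ∈ U, define the conformal factor λ(ζ) = (1+|g(ζ)|²)/(2|g'(ζ)|), the Gauss curvature K(ζ) = -(2|g'(ζ)|/(1+|g(ζ)|²))⁴, and the angle function N(ζ) = (1-|g(ζ)|²)/(1+|g(ζ)|²). Then Chern's identity holds on U: λ(ζ)^{-2}·Δ ln(1+N(ζ)) = K(ζ), where Δ = ∂²/∂u² + ∂²/∂v² is the flat Laplacian in ζ = u+iv. -/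
/-! Since `1 + N = 2 / (1 + |g|²)`, Chern's identity reduces to the classical formula
`Δ log (1 + |g|²) = 4 |g'|² / (1 + |g|²)²` for holomorphic `g`, i.e. to the fact that the
spherical metric has curvature `1`. Along the two coordinate lines the chain rule gives the
second derivatives of `log (1 + |g|²)`; in their sum the terms involving `g''` cancel because
`I² = -1`, and the remaining ones combine through `⟪a, b⟫² + ⟪a, b * I⟫² = |a|² |b|²`. -/

open scoped RealInnerProductSpace
open Complex Filter Topology

lemma Real.log_one_add_div_one_add {a : ℝ} (ha : 1 + a ≠ 0) :
    Real.log (1 + (1 - a) / (1 + a)) = Real.log 2 - Real.log (1 + a) := by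
  rw [show 1 + (1 - a) / (1 + a) = 2 / (1 + a) by field_simp; ring,
    Real.log_div two_ne_zero ha]

lemma iteratedDeriv_two_eq_of_hasDerivAt {𝕜 F : Type*} [NontriviallyNormedField 𝕜]
    [NormedAddCommGroup F] [NormedSpace 𝕜 F] {f f' : 𝕜 → F} {f'' : F} {t : 𝕜}
    (hf : ∀ᶠ s in 𝓝 t, HasDerivAt f (f' s) s) (hf' : HasDerivAt f' f'' t) :
    iteratedDeriv 2 f t = f'' := by
  have hderiv : deriv f =ᶠ[𝓝 t] f' := hf.mono fun s hs => hs.deriv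
  rw [iteratedDeriv_succ, iteratedDeriv_one, hderiv.deriv_eq, hf'.deriv]

lemma IsOpen.hasDerivAt_deriv_of_forall_hasDerivAt {U : Set ℂ} (hU : IsOpen U) {g g' : ℂ → ℂ}
    (hg : ∀ z ∈ U, HasDerivAt g (g' z) z) : ∀ z ∈ U, HasDerivAt g' (deriv g' z) z := by
  have hg'_eq : Set.EqOn (deriv g) g' U := fun z hz => (hg z hz).deriv
  have hdiff : DifferentiableOn ℂ g' U :=
    (DifferentiableOn.deriv (fun z hz => (hg z hz).differentiableAt.differentiableWithinAt)
      hU).congr hg'_eq.symm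
  exact fun z hz => (hdiff.differentiableAt (hU.mem_nhds hz)).hasDerivAt

section Curve

variable {E : Type*} [NormedAddCommGroup E] [InnerProductSpace ℝ E]

lemma HasDerivAt.log_one_add_norm_sq {G : ℝ → E} {G' : E} {t : ℝ} (hG : HasDerivAt G G' t) :
    HasDerivAt (fun s => Real.log (1 + ‖G s‖ ^ 2)) (2 * ⟪G t, G'⟫ / (1 + ‖G t‖ ^ 2)) t :=
  (hG.norm_sq.const_add 1).log (by positivity)

lemma iteratedDeriv_two_log_one_add_norm_sq {G G' : ℝ → E} {G'' : E} {t : ℝ}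
    (hG : ∀ᶠ s in 𝓝 t, HasDerivAt G (G' s) s) (hG' : HasDerivAt G' G'' t) :
    iteratedDeriv 2 (fun s => Real.log (1 + ‖G s‖ ^ 2)) t =
      (2 * (⟪G t, G''⟫ + ‖G' t‖ ^ 2) * (1 + ‖G t‖ ^ 2) - (2 * ⟪G t, G' t⟫) ^ 2) /
        (1 + ‖G t‖ ^ 2) ^ 2 := by
  have hGt : HasDerivAt G (G' t) t := hG.self_of_nhds
  have hnum : HasDerivAt (fun s => 2 * ⟪G s, G' s⟫) (2 * (⟪G t, G''⟫ + ‖G' t‖ ^ 2)) t := by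
    simpa only [real_inner_self_eq_norm_sq, add_comm] using (hGt.inner ℝ hG').const_mul 2
  have hquot := hnum.div (hGt.norm_sq.const_add 1) (by positivity)
  rw [iteratedDeriv_two_eq_of_hasDerivAt (hG.mono fun s hs => hs.log_one_add_norm_sq) hquot]
  ring

end Curve

lemma inner_sq_add_inner_mul_I_sq (a b : ℂ) : ⟪a, b⟫ ^ 2 + ⟪a, b * I⟫ ^ 2 = ‖a‖ ^ 2 * ‖b‖ ^ 2 := by
  simp only [Complex.inner, Complex.sq_norm, normSq_apply, mul_re, mul_im, conj_re, conj_im,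
    I_re, I_im]
  ring

lemma iteratedDeriv_two_log_one_add_norm_sq_comp {U : Set ℂ} (hU : IsOpen U) {g g' : ℂ → ℂ}
    (hg : ∀ z ∈ U, HasDerivAt g (g' z) z) {c : ℝ → ℂ} {d : ℂ} (hc : ∀ s, HasDerivAt c d s)
    {t : ℝ} (ht : c t ∈ U) :
    iteratedDeriv 2 (fun s => Real.log (1 + ‖g (c s)‖ ^ 2)) t =
      (2 * (⟪g (c t), deriv g' (c t) * d * d⟫ + ‖g' (c t) * d‖ ^ 2) * (1 + ‖g (c t)‖ ^ 2) -
          (2 * ⟪g (c t), g' (c t) * d⟫) ^ 2) / (1 + ‖g (c t)‖ ^ 2) ^ 2 := by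
  have hcU : ∀ᶠ s in 𝓝 t, c s ∈ U :=
    (hc t).continuousAt.preimage_mem_nhds (hU.mem_nhds ht)
  have hG : ∀ᶠ s in 𝓝 t, HasDerivAt (fun s => g (c s)) (g' (c s) * d) s :=
    hcU.mono fun s hs => (hg _ hs).comp s (hc s)
  have hG' : HasDerivAt (fun s => g' (c s) * d) (deriv g' (c t) * d * d) t :=
    ((hU.hasDerivAt_deriv_of_forall_hasDerivAt hg _ ht).comp t (hc t)).mul_const d
  rw [iteratedDeriv_two_log_one_add_norm_sq hG hG']

lemma laplacian_log_one_add_norm_sq {U : Set ℂ} (hU : IsOpen U) {g g' : ℂ → ℂ}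
    (hg : ∀ z ∈ U, HasDerivAt g (g' z) z) {u v : ℝ} (hmem : (u + v * I : ℂ) ∈ U) :
    iteratedDeriv 2 (fun s : ℝ => Real.log (1 + ‖g (s + v * I)‖ ^ 2)) u +
        iteratedDeriv 2 (fun s : ℝ => Real.log (1 + ‖g (u + s * I)‖ ^ 2)) v =
      4 * ‖g' (u + v * I)‖ ^ 2 / (1 + ‖g (u + v * I)‖ ^ 2) ^ 2 := by
  have hline_u : ∀ s : ℝ, HasDerivAt (fun s : ℝ => (s : ℂ) + v * I) 1 s := fun s =>
    (ofRealCLM.hasDerivAt (x := s)).add_const _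
  have hline_v : ∀ s : ℝ, HasDerivAt (fun s : ℝ => (u : ℂ) + s * I) I s := fun s => by
    simpa using ((ofRealCLM.hasDerivAt (x := s)).mul_const I).const_add (u : ℂ)
  rw [iteratedDeriv_two_log_one_add_norm_sq_comp hU hg hline_u hmem,
    iteratedDeriv_two_log_one_add_norm_sq_comp hU hg hline_v hmem]
  set P := g (u + v * I)
  set Q := g' (u + v * I)
  set R := deriv g' (u + v * I)
  have hR : ⟪P, R * I * I⟫ = -⟪P, R⟫ := by
    rw [mul_assoc R I I, I_mul_I, mul_neg_one, inner_neg_right]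
  simp only [mul_one, norm_mul, norm_I, hR]
  have hpos : 0 < 1 + ‖P‖ ^ 2 := by positivity
  field_simp
  linear_combination -4 * inner_sq_add_inner_mul_I_sq P Q

theorem chern_identity_general
    (U : Set ℂ) (hU : IsOpen U) (g g' : ℂ → ℂ)
    (hg : ∀ ζ ∈ U, HasDerivAt g (g' ζ) ζ)
    (lam K N : ℂ → ℝ)
    (hlam : ∀ ζ, lam ζ = (1 + ‖g ζ‖ ^ 2) / (2 * ‖g' ζ‖))
    (hK : ∀ ζ, K ζ = -(2 * ‖g' ζ‖ / (1 + ‖g ζ‖ ^ 2)) ^ 4)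
    (hN : ∀ ζ, N ζ = (1 - ‖g ζ‖ ^ 2) / (1 + ‖g ζ‖ ^ 2))
    (F : ℝ → ℝ → ℝ)
    (hF : ∀ u v : ℝ, F u v = Real.log (1 + N (u + v * Complex.I))) :
    ∀ u v : ℝ, (u + v * Complex.I : ℂ) ∈ U →
      (lam (u + v * Complex.I) ^ 2)⁻¹ *
        (iteratedDeriv 2 (fun u' => F u' v) u + iteratedDeriv 2 (fun v' => F u v') v)
      = K (u + v * Complex.I) := by
  intro u v hmem
  have hF_eq : ∀ u' v' : ℝ,
      F u' v' = Real.log 2 - Real.log (1 + ‖g (u' + v' * I)‖ ^ 2) := fun u' v' => by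
    rw [hF, hN, Real.log_one_add_div_one_add (by positivity)]
  simp only [hF_eq]
  rw [iteratedDeriv_const_sub two_pos, iteratedDeriv_const_sub two_pos, iteratedDeriv_neg,
    iteratedDeriv_neg, ← neg_add,
    laplacian_log_one_add_norm_sq hU hg hmem, hlam, hK]
  have hpos : 0 < 1 + ‖g (u + v * I)‖ ^ 2 := by positivity
  field_simp
  ring

/-- **Chern's identity.** With conformal factor `λ = (1+|g|²)/(2|g'|)`, Gauss
curvature `K = -(2|g'|/(1+|g|²))⁴` and angle function `N = (1-|g|²)/(1+|g|²)`, one has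
`λ⁻²·Δ ln(1+N) = K` on `U`, where `Δ = ∂²/∂u² + ∂²/∂v²` is the flat Laplacian in `ζ = u+iv`. -/
theorem chern_identity
    (U : Set ℂ) (hU : IsOpen U) (g g' : ℂ → ℂ)
    (hg : ∀ ζ ∈ U, HasDerivAt g (g' ζ) ζ)
    (hg' : ∀ ζ ∈ U, g' ζ ≠ 0)
    (lam K N : ℂ → ℝ)
    (hlam : ∀ ζ, lam ζ = (1 + ‖g ζ‖ ^ 2) / (2 * ‖g' ζ‖))
    (hK : ∀ ζ, K ζ = -(2 * ‖g' ζ‖ / (1 + ‖g ζ‖ ^ 2)) ^ 4)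
    (hN : ∀ ζ, N ζ = (1 - ‖g ζ‖ ^ 2) / (1 + ‖g ζ‖ ^ 2))
    (F : ℝ → ℝ → ℝ)
    (hF : ∀ u v : ℝ, F u v = Real.log (1 + N (u + v * Complex.I))) :
    ∀ u v : ℝ, (u + v * Complex.I : ℂ) ∈ U →
      (lam (u + v * Complex.I) ^ 2)⁻¹ *
        (iteratedDeriv 2 (fun u' => F u' v) u + iteratedDeriv 2 (fun v' => F u v') v)
      = K (u + v * Complex.I) :=
  chern_identity_general U hU g g' hg lam K N hlam hK hN F hF
end

section
/- Let g : ℂ → ℂ be holomorphic on an open set U with g'(ζ) ≠ 0 for all ζ ∈ U, define the conformal factor λ(ζ) = (1+|g(ζ)|²)/(2|g'(ζ)|) and the Gauss curvature K(ζ) = -(2|g'(ζ)|/(1+|g(ζ)|²))⁴. Then Ricci's identity holds on U: λ(ζ)^{-2}·Δ ln(-K(ζ)) = 4K(ζ), where Δ = ∂²/∂u² + ∂²/∂v² is the flat Laplacian in ζ = u+iv. -/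
/-!
Since `-K = (2‖g'‖/(1+‖g‖²))⁴`, we have `ln(-K) = 4 ln 2 + 2 ln ‖g'‖² - 4 ln (1 + ‖g‖²)`.
For holomorphic `h`, the second derivative of `ln (c + ‖h‖²)` along the direction `w` is
`(2 (‖h' w‖² + ⟪h, h'' w²⟫) (c + ‖h‖²) - 4 ⟪h, h' w⟫²) / (c + ‖h‖²)²`. Summing over `w = 1` and
`w = i`, the `h''` terms cancel since `i² = -1`, and `⟪h, h'⟫² + ⟪h, h' i⟫² = ‖h‖² ‖h'‖²`, so
`Δ ln (c + ‖h‖²) = 4 c ‖h'‖² / (c + ‖h‖²)²`. Hence `ln ‖g'‖²` is harmonic and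
`Δ ln(-K) = -16 ‖g'‖² / (1 + ‖g‖²)² = 4 K λ²`.
-/

open Complex Filter Topology

lemma iteratedDeriv_two_eq_of_hasDerivAt_s8 {f f' : ℝ → ℝ} {s : Set ℝ} {x a : ℝ} (hs : IsOpen s)
    (hx : x ∈ s) (hf : ∀ t ∈ s, HasDerivAt f (f' t) t) (hf' : HasDerivAt f' a x) :
    iteratedDeriv 2 f x = a := by
  have hderiv : deriv f =ᶠ[𝓝 x] f' :=
    eventually_of_mem (hs.mem_nhds hx) fun t ht ↦ (hf t ht).deriv
  rw [iteratedDeriv_succ, iteratedDeriv_one, hderiv.deriv_eq, hf'.deriv]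

section LogConstAddNormSq

variable {E : Type*} [NormedAddCommGroup E] [InnerProductSpace ℝ E] {c : ℝ}

lemma hasDerivAt_log_const_add_norm_sq {φ : ℝ → E} {φ' : E} {t : ℝ} (hφ : HasDerivAt φ φ' t)
    (hc : c + ‖φ t‖ ^ 2 ≠ 0) :
    HasDerivAt (fun t ↦ Real.log (c + ‖φ t‖ ^ 2)) (2 * inner ℝ (φ t) φ' / (c + ‖φ t‖ ^ 2)) t :=
  (hφ.norm_sq.const_add c).log hc

lemma hasDerivAt_inner_div_const_add_norm_sq {φ φ' : ℝ → E} {φ'' : E} {t : ℝ}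
    (hφ : HasDerivAt φ (φ' t) t) (hφ' : HasDerivAt φ' φ'' t) (hc : c + ‖φ t‖ ^ 2 ≠ 0) :
    HasDerivAt (fun t ↦ 2 * inner ℝ (φ t) (φ' t) / (c + ‖φ t‖ ^ 2))
      ((2 * (‖φ' t‖ ^ 2 + inner ℝ (φ t) φ'') * (c + ‖φ t‖ ^ 2)
        - 2 * inner ℝ (φ t) (φ' t) * (2 * inner ℝ (φ t) (φ' t))) / (c + ‖φ t‖ ^ 2) ^ 2) t := by
  refine (((hφ.inner ℝ hφ').const_mul 2).fun_div (hφ.norm_sq.const_add c) hc).congr_deriv ?_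
  rw [real_inner_self_eq_norm_sq]
  ring

lemma iteratedDeriv_two_log_const_add_norm_sq {φ φ' : ℝ → E} {φ'' : E} {s : Set ℝ} {x : ℝ}
    (hs : IsOpen s) (hx : x ∈ s) (hφ : ∀ t ∈ s, HasDerivAt φ (φ' t) t)
    (hφ' : HasDerivAt φ' φ'' x) (hc : ∀ t ∈ s, c + ‖φ t‖ ^ 2 ≠ 0) :
    iteratedDeriv 2 (fun t ↦ Real.log (c + ‖φ t‖ ^ 2)) x =
      (2 * (‖φ' x‖ ^ 2 + inner ℝ (φ x) φ'') * (c + ‖φ x‖ ^ 2)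
        - 2 * inner ℝ (φ x) (φ' x) * (2 * inner ℝ (φ x) (φ' x))) / (c + ‖φ x‖ ^ 2) ^ 2 :=
  iteratedDeriv_two_eq_of_hasDerivAt_s8 hs hx
    (fun t ht ↦ hasDerivAt_log_const_add_norm_sq (hφ t ht) (hc t ht))
    (hasDerivAt_inner_div_const_add_norm_sq (hφ x hx) hφ' (hc x hx))

end LogConstAddNormSq

noncomputable def coordLaplacian (f : ℂ → ℝ) (u v : ℝ) : ℝ :=
  iteratedDeriv 2 (fun s : ℝ ↦ f (s + v * I)) u + iteratedDeriv 2 (fun t : ℝ ↦ f (u + t * I)) v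

section CoordLaplacian

variable {f k : ℂ → ℝ} {u v : ℝ}

lemma contDiff_horizontalLine (v : ℝ) : ContDiff ℝ 2 fun s : ℝ ↦ (s : ℂ) + v * I :=
  ofRealCLM.contDiff.add contDiff_const

lemma contDiff_verticalLine (u : ℝ) : ContDiff ℝ 2 fun t : ℝ ↦ (u : ℂ) + t * I :=
  contDiff_const.add (ofRealCLM.contDiff.mul contDiff_const)

lemma coordLaplacian_congr (hfk : f =ᶠ[𝓝 (u + v * I)] k) :
    coordLaplacian f u v = coordLaplacian k u v :=
  congr_arg₂ (· + ·)
    ((hfk.comp_tendsto ((contDiff_horizontalLine v).continuous.tendsto u)).iteratedDeriv_eq 2)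
    ((hfk.comp_tendsto ((contDiff_verticalLine u).continuous.tendsto v)).iteratedDeriv_eq 2)

lemma coordLaplacian_const_add (a : ℝ) :
    coordLaplacian (fun z ↦ a + f z) u v = coordLaplacian f u v := by
  simp only [coordLaplacian, iteratedDeriv_const_add two_pos]

lemma coordLaplacian_const_mul (a : ℝ) :
    coordLaplacian (fun z ↦ a * f z) u v = a * coordLaplacian f u v := by
  simp only [coordLaplacian, iteratedDeriv_const_mul_field, mul_add]

lemma coordLaplacian_sub (hf : ContDiffAt ℝ 2 f (u + v * I)) (hk : ContDiffAt ℝ 2 k (u + v * I)) :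
    coordLaplacian (fun z ↦ f z - k z) u v = coordLaplacian f u v - coordLaplacian k u v := by
  have hre := (contDiff_horizontalLine v).contDiffAt (x := u)
  have him := (contDiff_verticalLine u).contDiffAt (x := v)
  have hfre : ContDiffAt ℝ 2 (fun s : ℝ ↦ f (s + v * I)) u := hf.comp u hre
  have hkre : ContDiffAt ℝ 2 (fun s : ℝ ↦ k (s + v * I)) u := hk.comp u hre
  have hfim : ContDiffAt ℝ 2 (fun t : ℝ ↦ f (u + t * I)) v := hf.comp v him
  have hkim : ContDiffAt ℝ 2 (fun t : ℝ ↦ k (u + t * I)) v := hk.comp v him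
  rw [coordLaplacian, coordLaplacian, coordLaplacian, iteratedDeriv_fun_sub hfre hkre,
    iteratedDeriv_fun_sub hfim hkim]
  ring

end CoordLaplacian

section Holomorphic

variable {h : ℂ → ℂ} {U : Set ℂ} {c : ℝ}

lemma iteratedDeriv_two_log_const_add_norm_sq_comp {γ : ℝ → ℂ} {w : ℂ} {x : ℝ}
    (hU : IsOpen U) (hh : DifferentiableOn ℂ h U) (hc : ∀ z ∈ U, c + ‖h z‖ ^ 2 ≠ 0)
    (hγ : ∀ t, HasDerivAt γ w t) (hx : γ x ∈ U) :
    iteratedDeriv 2 (fun t ↦ Real.log (c + ‖h (γ t)‖ ^ 2)) x =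
      (2 * (‖deriv h (γ x) * w‖ ^ 2 + inner ℝ (h (γ x)) (deriv (deriv h) (γ x) * w * w))
          * (c + ‖h (γ x)‖ ^ 2)
        - 2 * inner ℝ (h (γ x)) (deriv h (γ x) * w) * (2 * inner ℝ (h (γ x)) (deriv h (γ x) * w)))
        / (c + ‖h (γ x)‖ ^ 2) ^ 2 := by
  have hA := hh.analyticOnNhd hU
  have hγc : Continuous γ := continuous_iff_continuousAt.2 fun t ↦ (hγ t).continuousAt
  refine iteratedDeriv_two_log_const_add_norm_sq (φ := h ∘ γ) (φ' := fun t ↦ deriv h (γ t) * w)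
    (hU.preimage hγc) hx (fun t ht ↦ ?_) ?_ (fun t ht ↦ hc _ ht)
  · exact (hA _ ht).differentiableAt.hasDerivAt.comp t (hγ t)
  · exact ((hA.deriv _ hx).differentiableAt.hasDerivAt.comp x (hγ x)).mul_const w

lemma contDiffAt_log_const_add_norm_sq (hU : IsOpen U) (hh : DifferentiableOn ℂ h U) {z : ℂ}
    (hz : z ∈ U) (hc : c + ‖h z‖ ^ 2 ≠ 0) :
    ContDiffAt ℝ 2 (fun z ↦ Real.log (c + ‖h z‖ ^ 2)) z :=
  (contDiffAt_const.add ((contDiff_norm_sq ℝ).contDiffAt.comp z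
    (((hh.contDiffOn hU).contDiffAt (hU.mem_nhds hz)).restrict_scalars ℝ))).log hc

lemma coordLaplacian_log_const_add_norm_sq (hU : IsOpen U) (hh : DifferentiableOn ℂ h U)
    (hc : ∀ z ∈ U, c + ‖h z‖ ^ 2 ≠ 0) {u v : ℝ} (huv : (u + v * I : ℂ) ∈ U) :
    coordLaplacian (fun z ↦ Real.log (c + ‖h z‖ ^ 2)) u v =
      4 * c * ‖deriv h (u + v * I)‖ ^ 2 / (c + ‖h (u + v * I)‖ ^ 2) ^ 2 := by
  have hre (s : ℝ) : HasDerivAt (fun s : ℝ ↦ (s : ℂ) + v * I) 1 s :=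
    (hasDerivAt_id (s : ℂ)).comp_ofReal.add_const _
  have him (t : ℝ) : HasDerivAt (fun t : ℝ ↦ (u : ℂ) + t * I) I t := by
    simpa using ((hasDerivAt_id (t : ℂ)).comp_ofReal.mul_const I).const_add (u : ℂ)
  rw [coordLaplacian, iteratedDeriv_two_log_const_add_norm_sq_comp hU hh hc hre huv,
    iteratedDeriv_two_log_const_add_norm_sq_comp hU hh hc him huv]
  have hcz := hc _ huv
  set a := h (u + v * I)
  set b := deriv h (u + v * I)
  set d := deriv (deriv h) (u + v * I)
  have hnorm : ‖b * 1‖ ^ 2 + ‖b * I‖ ^ 2 = 2 * ‖b‖ ^ 2 := by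
    simp only [mul_one, norm_mul, norm_I]
    ring
  have hsecond : inner ℝ a (d * 1 * 1) + inner ℝ a (d * I * I) = 0 := by
    simp only [mul_assoc, I_mul_I, mul_one, mul_neg, inner_neg_right, add_neg_cancel]
  have hfirst : inner ℝ a (b * 1) ^ 2 + inner ℝ a (b * I) ^ 2 = ‖a‖ ^ 2 * ‖b‖ ^ 2 := by
    simp only [Complex.inner, ← Complex.normSq_eq_norm_sq, Complex.normSq_apply, mul_re, mul_im,
      conj_re, conj_im, I_re, I_im, one_re, one_im]
    ring
  rw [← add_div, div_left_inj' (pow_ne_zero 2 hcz)]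
  linear_combination (2 * (c + ‖a‖ ^ 2)) * (hnorm + hsecond) - 4 * hfirst

end Holomorphic

lemma log_two_mul_norm_div_pow_four {a b : ℂ} (ha : a ≠ 0) :
    Real.log ((2 * ‖a‖ / (1 + ‖b‖ ^ 2)) ^ 4)
      = 4 * Real.log 2 + (2 * Real.log (‖a‖ ^ 2) - 4 * Real.log (1 + ‖b‖ ^ 2)) := by
  rw [Real.log_pow, Real.log_div (by positivity) (by positivity),
    Real.log_mul two_ne_zero (norm_ne_zero_iff.2 ha), Real.log_pow]
  push_cast
  ring

lemma coordLaplacian_log_two_mul_norm_div_pow_four {U : Set ℂ} (hU : IsOpen U) {g g' : ℂ → ℂ}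
    (hg : ∀ ζ ∈ U, HasDerivAt g (g' ζ) ζ) (hg' : ∀ ζ ∈ U, g' ζ ≠ 0) {u v : ℝ}
    (hz : (u + v * I : ℂ) ∈ U) :
    coordLaplacian (fun ζ ↦ Real.log ((2 * ‖g' ζ‖ / (1 + ‖g ζ‖ ^ 2)) ^ 4)) u v
      = -16 * ‖g' (u + v * I)‖ ^ 2 / (1 + ‖g (u + v * I)‖ ^ 2) ^ 2 := by
  have hgU : DifferentiableOn ℂ g U := fun ζ hζ ↦ (hg ζ hζ).differentiableAt.differentiableWithinAt
  have hderiv : Set.EqOn g' (deriv g) U := fun ζ hζ ↦ (hg ζ hζ).deriv.symm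
  have hg'U : DifferentiableOn ℂ g' U :=
    (hgU.analyticOnNhd hU).deriv.differentiableOn.congr hderiv
  have hone : ∀ ζ ∈ U, (1 : ℝ) + ‖g ζ‖ ^ 2 ≠ 0 := fun ζ _ ↦ by positivity
  have hzero : ∀ ζ ∈ U, (0 : ℝ) + ‖g' ζ‖ ^ 2 ≠ 0 := fun ζ hζ ↦ by simpa using hg' ζ hζ
  have hsmooth_g' : ContDiffAt ℝ 2 (fun ζ ↦ Real.log (‖g' ζ‖ ^ 2)) (u + v * I) := by
    simpa using contDiffAt_log_const_add_norm_sq hU hg'U hz (hzero _ hz)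
  have hsmooth_g := contDiffAt_log_const_add_norm_sq hU hgU hz (hone _ hz)
  have hharmonic : coordLaplacian (fun ζ ↦ Real.log (‖g' ζ‖ ^ 2)) u v = 0 := by
    simpa using coordLaplacian_log_const_add_norm_sq hU hg'U hzero hz
  have hexpand : (fun ζ ↦ Real.log ((2 * ‖g' ζ‖ / (1 + ‖g ζ‖ ^ 2)) ^ 4)) =ᶠ[𝓝 (u + v * I)]
      fun ζ ↦ 4 * Real.log 2 + (2 * Real.log (‖g' ζ‖ ^ 2) - 4 * Real.log (1 + ‖g ζ‖ ^ 2)) :=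
    eventually_of_mem (hU.mem_nhds hz) fun ζ hζ ↦ log_two_mul_norm_div_pow_four (hg' ζ hζ)
  rw [coordLaplacian_congr hexpand, coordLaplacian_const_add,
    coordLaplacian_sub (contDiffAt_const.mul hsmooth_g') (contDiffAt_const.mul hsmooth_g),
    coordLaplacian_const_mul, coordLaplacian_const_mul, hharmonic,
    coordLaplacian_log_const_add_norm_sq hU hgU hone hz, ← hderiv hz]
  ring

/-- **Ricci's identity.** With conformal factor `λ = (1+|g|²)/(2|g'|)` and Gauss
curvature `K = -(2|g'|/(1+|g|²))⁴`, one has `λ⁻²·Δ ln(-K) = 4K` on `U`, where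
`Δ = ∂²/∂u² + ∂²/∂v²` is the flat Laplacian in `ζ = u+iv`. -/
theorem ricci_identity
    (U : Set ℂ) (hU : IsOpen U) (g g' : ℂ → ℂ)
    (hg : ∀ ζ ∈ U, HasDerivAt g (g' ζ) ζ)
    (hg' : ∀ ζ ∈ U, g' ζ ≠ 0)
    (lam K : ℂ → ℝ)
    (hlam : ∀ ζ, lam ζ = (1 + ‖g ζ‖ ^ 2) / (2 * ‖g' ζ‖))
    (hK : ∀ ζ, K ζ = -(2 * ‖g' ζ‖ / (1 + ‖g ζ‖ ^ 2)) ^ 4)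
    (F : ℝ → ℝ → ℝ)
    (hF : ∀ u v : ℝ, F u v = Real.log (-K (u + v * Complex.I))) :
    ∀ u v : ℝ, (u + v * Complex.I : ℂ) ∈ U →
      (lam (u + v * Complex.I) ^ 2)⁻¹ *
        (iteratedDeriv 2 (fun u' => F u' v) u + iteratedDeriv 2 (fun v' => F u v') v)
      = 4 * K (u + v * Complex.I) := by
  intro u v hz
  have hΔ : iteratedDeriv 2 (fun u' => F u' v) u + iteratedDeriv 2 (fun v' => F u v') v
      = coordLaplacian (fun ζ ↦ Real.log ((2 * ‖g' ζ‖ / (1 + ‖g ζ‖ ^ 2)) ^ 4)) u v := by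
    simp only [hF, hK, neg_neg]
    rfl
  have hg'z : ‖g' (u + v * I)‖ ≠ 0 := norm_ne_zero_iff.2 (hg' _ hz)
  rw [hΔ, coordLaplacian_log_two_mul_norm_div_pow_four hU hg hg' hz, hlam, hK]
  field_simp
  ring
end

section
/- Let X : ℝ × ℝ → ℝ³ be Enneper's patch X(u,v) = (½(u - u³/3 + uv²), ½(-v + v³/3 - u²v), ½(u² - v²)), let N(u,v) = (X_u × X_v)/‖X_u × X_v‖ be its unit normal, and let K(u,v) = -(2/(1+u²+v²))⁴ be its Gauss curvature. Then for all (u,v), the quantity (-K(u,v))^{-1/4}·(1 + ⟨N(u,v), (0,0,-1)⟩) equals 1; that is, the first Chern–Ricci function of Enneper's surface with respect to V = -e₃ is identically 0. -/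
/-!
The Gauss map of Enneper's surface is inverse stereographic projection: `X_u × X_v` is the
positive multiple `(1 + u² + v²)² / 4` of the unit vector
`(2u, 2v, u² + v² - 1) / (1 + u² + v²)`.
Hence `1 + ⟨N, -e₃⟩ = 2 / (1 + u² + v²)`, which is exactly `(-K)^(1/4)`.
-/

/-- Enneper's patch `X(u,v) = (½(u - u³/3 + uv²), ½(-v + v³/3 - u²v), ½(u² - v²))`. -/
noncomputable def enneperPatch (u v : ℝ) : EuclideanSpace ℝ (Fin 3) :=
  WithLp.toLp 2 ![(1 / 2) * (u - u ^ 3 / 3 + u * v ^ 2),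
    (1 / 2) * (-v + v ^ 3 / 3 - u ^ 2 * v),
    (1 / 2) * (u ^ 2 - v ^ 2)]

/-- The cross product of two vectors in `ℝ³`. -/
noncomputable def cross3 (a b : EuclideanSpace ℝ (Fin 3)) : EuclideanSpace ℝ (Fin 3) :=
  WithLp.toLp 2 ![a 1 * b 2 - a 2 * b 1, a 2 * b 0 - a 0 * b 2, a 0 * b 1 - a 1 * b 0]

/-- The unit normal of Enneper's patch, `N = (X_u × X_v)/‖X_u × X_v‖`. -/
noncomputable def enneperNormal (u v : ℝ) : EuclideanSpace ℝ (Fin 3) :=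
  ‖cross3 (deriv (fun u' => enneperPatch u' v) u) (deriv (fun v' => enneperPatch u v') v)‖⁻¹ •
    cross3 (deriv (fun u' => enneperPatch u' v) u) (deriv (fun v' => enneperPatch u v') v)

open WithLp

theorem hasDerivAt_euclidean {ι : Type*} [Fintype ι] {f : ℝ → EuclideanSpace ℝ ι}
    {f' : EuclideanSpace ℝ ι} {t : ℝ} :
    HasDerivAt f f' t ↔ ∀ i, HasDerivAt (fun x => f x i) (f' i) t := by
  refine ⟨fun h i => (PiLp.hasFDerivAt_apply 2 (f t) i).comp_hasDerivAt t h, fun h => ?_⟩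
  exact (PiLp.hasFDerivAt_toLp 2 (ofLp (f t))).comp_hasDerivAt t (hasDerivAt_pi.2 h)

theorem hasDerivAt_enneperPatch_fst (u v : ℝ) :
    HasDerivAt (fun u' => enneperPatch u' v)
      (toLp 2 ![(1 - u ^ 2 + v ^ 2) / 2, -(u * v), u]) u := by
  refine hasDerivAt_euclidean.2 fun i => ?_
  fin_cases i <;>
    simp only [Fin.zero_eta, Fin.mk_one, Fin.reduceFinMk, Fin.isValue, enneperPatch, one_div,
      Matrix.cons_val_zero, Matrix.cons_val_one, Matrix.cons_val]
  · refine ((((hasDerivAt_id' u).sub ((hasDerivAt_pow 3 u).div_const 3)).add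
      ((hasDerivAt_id' u).mul_const (v ^ 2))).const_mul 2⁻¹).congr_deriv ?_
    norm_num; ring
  · refine ((((hasDerivAt_pow 2 u).mul_const v).const_sub (-v + v ^ 3 / 3)).const_mul
      2⁻¹).congr_deriv ?_
    norm_num; ring
  · refine (((hasDerivAt_pow 2 u).sub_const (v ^ 2)).const_mul 2⁻¹).congr_deriv ?_
    norm_num; ring

theorem hasDerivAt_enneperPatch_snd (u v : ℝ) :
    HasDerivAt (fun v' => enneperPatch u v')
      (toLp 2 ![u * v, (v ^ 2 - u ^ 2 - 1) / 2, -v]) v := by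
  refine hasDerivAt_euclidean.2 fun i => ?_
  fin_cases i <;>
    simp only [Fin.zero_eta, Fin.mk_one, Fin.reduceFinMk, Fin.isValue, enneperPatch, one_div,
      Matrix.cons_val_zero, Matrix.cons_val_one, Matrix.cons_val]
  · refine ((((hasDerivAt_pow 2 v).const_mul u).const_add (u - u ^ 3 / 3)).const_mul
      2⁻¹).congr_deriv ?_
    norm_num; ring
  · refine ((((hasDerivAt_id' v).neg.add ((hasDerivAt_pow 3 v).div_const 3)).sub
      ((hasDerivAt_id' v).const_mul (u ^ 2))).const_mul 2⁻¹).congr_deriv ?_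
    norm_num; ring
  · refine (((hasDerivAt_pow 2 v).const_sub (u ^ 2)).const_mul 2⁻¹).congr_deriv ?_
    norm_num; ring

noncomputable def inverseStereographic (u v : ℝ) : EuclideanSpace ℝ (Fin 3) :=
  (1 + u ^ 2 + v ^ 2)⁻¹ • toLp 2 ![2 * u, 2 * v, u ^ 2 + v ^ 2 - 1]

theorem norm_inverseStereographic (u v : ℝ) : ‖inverseStereographic u v‖ = 1 := by
  have hρ : 0 < 1 + u ^ 2 + v ^ 2 := by positivity
  have hsq : ‖(toLp 2 ![2 * u, 2 * v, u ^ 2 + v ^ 2 - 1] : EuclideanSpace ℝ (Fin 3))‖ ^ 2 =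
      (1 + u ^ 2 + v ^ 2) ^ 2 := by
    rw [EuclideanSpace.norm_sq_eq, Fin.sum_univ_three]
    simp only [Fin.isValue, Matrix.cons_val_zero, Matrix.cons_val_one, Matrix.cons_val,
      Real.norm_eq_abs, sq_abs]
    ring
  rw [inverseStereographic, norm_smul, Real.norm_of_nonneg (inv_nonneg.2 hρ.le),
    (sq_eq_sq₀ (norm_nonneg _) hρ.le).1 hsq, inv_mul_cancel₀ hρ.ne']

theorem cross3_enneperPatch_partials (u v : ℝ) :
    cross3 (deriv (fun u' => enneperPatch u' v) u) (deriv (fun v' => enneperPatch u v') v) =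
      ((1 + u ^ 2 + v ^ 2) ^ 2 / 4) • inverseStereographic u v := by
  have hρ : 1 + u ^ 2 + v ^ 2 ≠ 0 := by positivity
  rw [(hasDerivAt_enneperPatch_fst u v).deriv, (hasDerivAt_enneperPatch_snd u v).deriv,
    inverseStereographic, smul_smul]
  ext i
  fin_cases i <;>
    simp only [cross3, Fin.zero_eta, Fin.mk_one, Fin.reduceFinMk, Fin.isValue, Matrix.cons_val_zero,
      Matrix.cons_val_one, Matrix.cons_val, PiLp.smul_apply, smul_eq_mul] <;>
    field_simp <;> ring

theorem enneperNormal_eq_inverseStereographic (u v : ℝ) :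
    enneperNormal u v = inverseStereographic u v := by
  rw [enneperNormal, ← NormedSpace.normalize, cross3_enneperPatch_partials,
    NormedSpace.normalize_smul_of_pos (by positivity),
    NormedSpace.normalize_eq_self_of_norm_eq_one (norm_inverseStereographic u v)]

theorem one_add_inner_inverseStereographic_neg_e3 (u v : ℝ) :
    1 + inner ℝ (inverseStereographic u v) (toLp 2 ![0, 0, -1] : EuclideanSpace ℝ (Fin 3)) =
      2 / (1 + u ^ 2 + v ^ 2) := by
  have hρ : 1 + u ^ 2 + v ^ 2 ≠ 0 := by positivity
  simp only [inverseStereographic, PiLp.inner_apply, PiLp.smul_apply, smul_eq_mul,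
    RCLike.inner_apply, Real.ringHom_apply, Fin.sum_univ_three, Fin.isValue, Matrix.cons_val_zero,
    Matrix.cons_val_one, Matrix.cons_val]
  field_simp
  ring

theorem pow_rpow_neg_inv_natCast {x : ℝ} (hx : 0 ≤ x) {n : ℕ} (hn : n ≠ 0) :
    (x ^ n) ^ (-(n⁻¹ : ℝ)) = x⁻¹ := by
  rw [Real.rpow_neg (pow_nonneg hx n), Real.pow_rpow_inv_natCast hx hn]

/-- For Enneper's surface, with Gauss curvature `K = -(2/(1+u²+v²))⁴` and unit
normal `N`, the quantity `(-K)^(-1/4)·(1 + ⟨N, -e₃⟩)` is identically `1`; i.e. the first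
Chern–Ricci function of Enneper's surface with respect to `V = -e₃` is identically `0`. -/
theorem enneper_first_chern_ricci_constant
    (K : ℝ → ℝ → ℝ) (hK : ∀ u v : ℝ, K u v = -(2 / (1 + u ^ 2 + v ^ 2)) ^ 4) :
    ∀ u v : ℝ,
      (-K u v) ^ (-(1 / 4) : ℝ) *
        (1 + (inner ℝ (enneperNormal u v) (WithLp.toLp 2 ![0, 0, -1] : EuclideanSpace ℝ (Fin 3)) : ℝ)) = 1 := by
  intro u v
  have hρ : 1 + u ^ 2 + v ^ 2 ≠ 0 := by positivity
  rw [hK, neg_neg, show (-(1 / 4) : ℝ) = -((4 : ℕ)⁻¹ : ℝ) by norm_num,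
    pow_rpow_neg_inv_natCast (by positivity) four_ne_zero, enneperNormal_eq_inverseStereographic,
    one_add_inner_inverseStereographic_neg_e3, inv_div, div_mul_div_cancel₀ two_ne_zero,
    div_self hρ]
end
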